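/- arXiv:2501.13285 — 2 statements merged into one kernel-verified Lean document; each statement's English description precedes it below -/
import Mathlib

section
/- Let (Ω, 𝓐) be a measurable space (the joint space of linkage structures and latent field values) and (Τ, 𝓑) a measurable space (the downstream-parameter space). Let ρ be a probability measure on Ω (the prior on (Λ, s)), let ℓ : Ω → ℝ≥0∞ be a measurable likelihood with 0 < ∫ ℓ dρ < ∞, and let κ be a Markov kernel from Ω to Τ (the downstream conditional prior ω ↦ p_AD(· ∣ ω)). Define the joint prior μ₀ := ρ ⊗ κ on Ω × Τ (the measure satisfying μ₀(A × B) = ∫_A κ(ω)(B) dρ(ω)), and define the joint posterior μ as the normalization of μ₀.withDensity(ℓ ∘ fst), i.e., μ := (∫ ℓ dρ)⁻¹ • μ₀.withDensity(ℓ ∘ fst). Define the record-linkage posterior π := (∫ ℓ dρ)⁻¹ • ρ.withDensity ℓ. Then the pushforward of μ under the second projection (the Τ-marginal posterior of the downstream parameter) equals the mixture π.bind κ, i.e., Measure.map Prod.snd μ = π.bind κ, and this measure is a probability measure. -/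
open MeasureTheory ProbabilityTheory
open scoped ENNReal

/-- **Theorem 4.1 (measure-theoretic form).**  Let `ρ` be the prior on the joint space
`Ω` of linkage structures and latent field values, `ℓ` a measurable likelihood with
`0 < ∫⁻ ℓ ∂ρ < ∞`, and `κ` a Markov kernel from `Ω` to the downstream-parameter
space `T` (the downstream conditional prior).  With joint prior `μ₀ = ρ ⊗ₘ κ` and
joint posterior `μ = (∫⁻ ℓ ∂ρ)⁻¹ • μ₀.withDensity (ℓ ∘ Prod.fst)`, and record-linkage
posterior `π = (∫⁻ ℓ ∂ρ)⁻¹ • ρ.withDensity ℓ`, the `T`-marginal posterior of the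
downstream parameter equals the mixture `π.bind κ`, and it is a probability measure. -/
theorem linkage_averaging_valid_posterior_measure
    {Ω : Type*} [MeasurableSpace Ω] {T : Type*} [MeasurableSpace T]
    (ρ : Measure Ω) [IsProbabilityMeasure ρ]
    (ℓ : Ω → ℝ≥0∞) (hℓ : Measurable ℓ)
    (hpos : 0 < ∫⁻ ω, ℓ ω ∂ρ) (hfin : ∫⁻ ω, ℓ ω ∂ρ < ⊤)
    (κ : ProbabilityTheory.Kernel Ω T) [ProbabilityTheory.IsMarkovKernel κ]
    (μ₀ : Measure (Ω × T)) (hμ₀ : μ₀ = ρ.compProd κ)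
    (μ : Measure (Ω × T))
    (hμ : μ = (∫⁻ ω, ℓ ω ∂ρ)⁻¹ • μ₀.withDensity (fun x => ℓ x.1))
    (π : Measure Ω)
    (hπ : π = (∫⁻ ω, ℓ ω ∂ρ)⁻¹ • ρ.withDensity ℓ) :
    Measure.map Prod.snd μ = π.bind (fun ω => κ ω) ∧
      IsProbabilityMeasure (Measure.map Prod.snd μ) := by
  set c : ℝ≥0∞ := ∫⁻ ω, ℓ ω ∂ρ with hc
  have hmain : Measure.map Prod.snd μ = π.bind (fun ω => κ ω) := by
    ext s hs
    have hκs : Measurable fun ω => κ ω s := Kernel.measurable_coe κ hs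
    rw [Measure.map_apply measurable_snd hs, hμ, Measure.smul_apply, smul_eq_mul,
      withDensity_apply _ (measurable_snd hs), hμ₀]
    have h1 : ∫⁻ x in Prod.snd ⁻¹' s, ℓ x.1 ∂(ρ.compProd κ)
        = ∫⁻ ω, ℓ ω * κ ω s ∂ρ := by
      rw [← lintegral_indicator (measurable_snd hs)]
      have : ∀ x : Ω × T, (Prod.snd ⁻¹' s).indicator (fun x : Ω × T => ℓ x.1) x
          = ℓ x.1 * s.indicator (fun _ => 1) x.2 := by
        intro x
        by_cases h : x.2 ∈ s <;> simp [Set.indicator, h]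
      simp_rw [this]
      rw [Measure.lintegral_compProd]
      · congr 1
        ext ω
        show ∫⁻ b, ℓ ω * s.indicator (fun _ => 1) b ∂(κ ω) = _
        rw [lintegral_const_mul _ (measurable_const.indicator hs)]
        congr 1
        rw [lintegral_indicator hs]
        simp
      · exact (hℓ.comp measurable_fst).mul
          ((measurable_const.indicator hs).comp measurable_snd)
    rw [h1, Measure.bind_apply hs (Kernel.measurable κ).aemeasurable, hπ]
    rw [lintegral_smul_measure, lintegral_withDensity_eq_lintegral_mul _ hℓ hκs]
    rfl
  refine ⟨hmain, ?_⟩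
  rw [hmain]
  constructor
  rw [Measure.bind_apply MeasurableSet.univ (Kernel.measurable κ).aemeasurable]
  simp only [measure_univ]
  rw [lintegral_one, hπ, Measure.smul_apply, withDensity_apply _ MeasurableSet.univ,
    Measure.restrict_univ, smul_eq_mul, ← hc]
  exact ENNReal.inv_mul_cancel hpos.ne' hfin.ne
end

section
/- Let (Ω, 𝓐) and (Τ, 𝓑) be measurable spaces, ρ a probability measure on Ω, ℓ : Ω → ℝ≥0∞ a measurable function with 0 < ∫ ℓ dρ < ∞, and κ a Markov kernel from Ω to Τ. Define μ₀ := ρ ⊗ κ on Ω × Τ and the joint posterior μ := (∫ ℓ dρ)⁻¹ • μ₀.withDensity(ℓ ∘ fst). Then the pushforward of μ under the first projection equals the record-linkage posterior: Measure.map Prod.fst μ = (∫ ℓ dρ)⁻¹ • ρ.withDensity ℓ. In particular, the Ω-marginal of the joint posterior does not depend on the kernel κ. -/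
open MeasureTheory ProbabilityTheory
open scoped ENNReal

/-- **No-feedback property (measure-theoretic form).**  Under the joint prior
`μ₀ = ρ ⊗ₘ κ` on `Ω × T` (prior `ρ` on the linkage structure and latent field values,
composed with the downstream conditional prior kernel `κ`) and a likelihood `ℓ`
depending only on the `Ω`-component, the `Ω`-marginal of the joint posterior
`μ = (∫⁻ ℓ ∂ρ)⁻¹ • μ₀.withDensity (ℓ ∘ Prod.fst)` is exactly the record-linkage
posterior `(∫⁻ ℓ ∂ρ)⁻¹ • ρ.withDensity ℓ`; in particular it does not depend on `κ`. -/
theorem joint_marginal_eq_record_linkage_posterior_measure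
    {Ω : Type*} [MeasurableSpace Ω] {T : Type*} [MeasurableSpace T]
    (ρ : Measure Ω) [IsProbabilityMeasure ρ]
    (ℓ : Ω → ℝ≥0∞) (hℓ : Measurable ℓ)
    (hpos : 0 < ∫⁻ ω, ℓ ω ∂ρ) (hfin : ∫⁻ ω, ℓ ω ∂ρ < ⊤)
    (κ : ProbabilityTheory.Kernel Ω T) [ProbabilityTheory.IsMarkovKernel κ]
    (μ₀ : Measure (Ω × T)) (hμ₀ : μ₀ = ρ.compProd κ)
    (μ : Measure (Ω × T))
    (hμ : μ = (∫⁻ ω, ℓ ω ∂ρ)⁻¹ • μ₀.withDensity (fun x => ℓ x.1)) :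
    Measure.map Prod.fst μ = (∫⁻ ω, ℓ ω ∂ρ)⁻¹ • ρ.withDensity ℓ := by
  subst hμ hμ₀
  ext s hs
  rw [Measure.map_apply measurable_fst hs, Measure.smul_apply, Measure.smul_apply,
    withDensity_apply _ hs,
    withDensity_apply _ ((hs.preimage measurable_fst))]
  have : Prod.fst ⁻¹' s = s ×ˢ (Set.univ : Set T) := by ext x; simp
  rw [this, Measure.setLIntegral_compProd (f := fun a : Ω × T => ℓ a.1) (hℓ.comp measurable_fst) hs MeasurableSet.univ]
  simp
end
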